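/- Let V be a variety with 0⃗ and 1⃗ having Boolean factor congruences (BFC). Then V has left existentially definable factor congruences (LexDFC) if and only if for every A ∈ V and every central element e⃗ ∈ Z(A), the factor congruence θ_{0,e} equals the principal congruence θ^A(0⃗,e⃗) generated by the pairs (0ᵢ,eᵢ), 1 ≤ i ≤ n. -/

import Mathlib

open FirstOrder FirstOrder.Language FirstOrder.Language.Structure

universe u v w

namespace Paper

variable {L : FirstOrder.Language.{0, 0}}

/-- A congruence on an `L`-algebra: an equivalence relation compatible with all operations. -/
structure AlgCon (L : FirstOrder.Language.{0, 0}) (A : Type u) [L.Structure A] where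
  r : A → A → Prop
  refl : ∀ a, r a a
  symm : ∀ {a b}, r a b → r b a
  trans : ∀ {a b c}, r a b → r b c → r a c
  compat : ∀ {m : ℕ} (f : L.Functions m) (x y : Fin m → A),
    (∀ i, r (x i) (y i)) → r (funMap f x) (funMap f y)

namespace AlgCon

variable {A : Type u} [L.Structure A]

theorem ext' {c d : AlgCon L A} (h : ∀ a b, c.r a b ↔ d.r a b) : c = d := by
  cases c; cases d
  simp only [AlgCon.mk.injEq]
  funext a b
  exact propext (h a b)

/-- The identity (diagonal) congruence Δ. -/
def delta (L : FirstOrder.Language.{0, 0}) (A : Type u) [L.Structure A] : AlgCon L A where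
  r := Eq
  refl := fun _ => rfl
  symm := fun h => h.symm
  trans := fun h1 h2 => h1.trans h2
  compat := fun f x y h => by rw [funext h]

/-- The universal congruence ∇. -/
def nabla (L : FirstOrder.Language.{0, 0}) (A : Type u) [L.Structure A] : AlgCon L A where
  r := fun _ _ => True
  refl := fun _ => trivial
  symm := fun _ => trivial
  trans := fun _ _ => trivial
  compat := fun _ _ _ _ => trivial

/-- Meet (intersection) of congruences. -/
def inf (c d : AlgCon L A) : AlgCon L A where
  r := fun a b => c.r a b ∧ d.r a b
  refl := fun a => ⟨c.refl a, d.refl a⟩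
  symm := fun h => ⟨c.symm h.1, d.symm h.2⟩
  trans := fun h1 h2 => ⟨c.trans h1.1 h2.1, d.trans h1.2 h2.2⟩
  compat := fun f x y h =>
    ⟨c.compat f x y fun i => (h i).1, d.compat f x y fun i => (h i).2⟩

/-- Relational composition of congruences (as a binary relation). -/
def comp (c d : AlgCon L A) (a b : A) : Prop := ∃ z, c.r a z ∧ d.r z b

/-- The congruence generated by a binary relation. -/
def conGen (L : FirstOrder.Language.{0, 0}) {A : Type u} [L.Structure A]
    (R : A → A → Prop) : AlgCon L A where
  r := fun a b => ∀ c : AlgCon L A, (∀ x y, R x y → c.r x y) → c.r a b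
  refl := fun a _ _ => AlgCon.refl _ a
  symm := fun h c hc => c.symm (h c hc)
  trans := fun h1 h2 c hc => c.trans (h1 c hc) (h2 c hc)
  compat := fun f x y h c hc => c.compat f x y fun i => h i c hc

/-- Join of congruences in the congruence lattice. -/
def sup (c d : AlgCon L A) : AlgCon L A :=
  conGen L (fun a b => c.r a b ∨ d.r a b)

end AlgCon

/-- The principal congruence θ(a⃗, b⃗) generated by the pairs (aᵢ, bᵢ). -/
def thetaPairs {A : Type u} [L.Structure A] {n : ℕ} (a b : Fin n → A) : AlgCon L A :=
  AlgCon.conGen L (fun x y => ∃ i, x = a i ∧ y = b i)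

/-- The congruence θ(S) generated by S × S. -/
def thetaSet {A : Type u} [L.Structure A] (S : Set A) : AlgCon L A :=
  AlgCon.conGen L (fun x y => x ∈ S ∧ y ∈ S)

/-- `[a⃗, b⃗] ∈ θ`: all pairs (aᵢ, bᵢ) belong to the congruence θ. -/
def inCon {A : Type u} [L.Structure A] {n : ℕ} (θ : AlgCon L A) (a b : Fin n → A) : Prop :=
  ∀ i, θ.r (a i) (b i)

/-- θ and δ are complementary factor congruences: θ ∩ δ = Δ and θ ∘ δ = ∇. -/
def IsComplFC {A : Type u} [L.Structure A] (θ δ : AlgCon L A) : Prop :=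
  θ.inf δ = AlgCon.delta L A ∧ ∀ a b : A, θ.comp δ a b

/-- The set of factor congruences of `A`. -/
def FC (L : FirstOrder.Language.{0, 0}) (A : Type u) [L.Structure A] : Set (AlgCon L A) :=
  {θ | ∃ δ, IsComplFC θ δ}

/-- `S` is a Boolean sublattice of the congruence lattice of `A`: it contains Δ and ∇,
is closed under meet and join, is distributive, and every element has a complement in `S`. -/
def IsBooleanSublattice {A : Type u} [L.Structure A] (S : Set (AlgCon L A)) : Prop :=
  AlgCon.delta L A ∈ S ∧ AlgCon.nabla L A ∈ S ∧
  (∀ θ ∈ S, ∀ δ ∈ S, θ.inf δ ∈ S) ∧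
  (∀ θ ∈ S, ∀ δ ∈ S, θ.sup δ ∈ S) ∧
  (∀ θ ∈ S, ∀ δ ∈ S, ∀ γ ∈ S, θ.inf (δ.sup γ) = (θ.inf δ).sup (θ.inf γ)) ∧
  (∀ θ ∈ S, ∃ δ ∈ S, θ.inf δ = AlgCon.delta L A ∧ θ.sup δ = AlgCon.nabla L A)

/-- An identity (equation between two terms in finitely many variables). -/
structure Identity (L : FirstOrder.Language.{0, 0}) where
  nvars : ℕ
  lhs : L.Term (Fin nvars)
  rhs : L.Term (Fin nvars)

/-- An identity holds in an algebra. -/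
def Identity.Holds (e : Identity L) (A : Type u) [L.Structure A] : Prop :=
  ∀ v : Fin e.nvars → A, e.lhs.realize v = e.rhs.realize v

/-- Membership of an algebra in the variety axiomatized by the set of identities `E`. -/
def InVariety (E : Set (Identity L)) (A : Type u) [L.Structure A] : Prop :=
  ∀ e ∈ E, e.Holds A

/-- The data of the closed terms 0₁, …, 0ₙ and 1₁, …, 1ₙ. -/
structure ZeroOneData (L : FirstOrder.Language.{0, 0}) where
  n : ℕ
  npos : 0 < n
  zero : Fin n → L.Term Empty
  one : Fin n → L.Term Empty

/-- The interpretation of the tuple 0⃗ in an algebra. -/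
def ZeroOneData.zeroA (Z : ZeroOneData L) (A : Type u) [L.Structure A] : Fin Z.n → A :=
  fun i => (Z.zero i).realize Empty.elim

/-- The interpretation of the tuple 1⃗ in an algebra. -/
def ZeroOneData.oneA (Z : ZeroOneData L) (A : Type u) [L.Structure A] : Fin Z.n → A :=
  fun i => (Z.one i).realize Empty.elim

/-- `V ⊨ (0⃗ ≈ 1⃗) → x ≈ y`: `V` is a variety with 0⃗ and 1⃗. -/
def ZeroOneData.Separates (Z : ZeroOneData L) (E : Set (Identity L)) : Prop :=
  ∀ (A : Type u) [L.Structure A], InVariety E A →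
    (∀ i, Z.zeroA A i = Z.oneA A i) → Subsingleton A

/-- Product structure on `A × B`. -/
instance prodStructure (A : Type u) (B : Type u) [L.Structure A] [L.Structure B] :
    L.Structure (A × B) where
  funMap := fun f x => (funMap f (fun i => (x i).1), funMap f (fun i => (x i).2))
  RelMap := fun r x => RelMap r (fun i => (x i).1) ∧ RelMap r (fun i => (x i).2)

/-- A witness that `e⃗` is a central element of `A`: an isomorphism
`τ : A ≅ A₁ × A₂` with `A₁, A₂ ∈ V` and `τ(e⃗) = [0⃗, 1⃗]`. -/
structure CentralWitness (E : Set (Identity L)) (Z : ZeroOneData L)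
    (A : Type u) [L.Structure A] (e : Fin Z.n → A) : Type (u + 1) where
  A₁ : Type u
  A₂ : Type u
  [s₁ : L.Structure A₁]
  [s₂ : L.Structure A₂]
  mem₁ : InVariety E A₁
  mem₂ : InVariety E A₂
  iso : A ≃[L] (A₁ × A₂)
  he : ∀ i, iso (e i) = (Z.zeroA A₁ i, Z.oneA A₂ i)

/-- A witness that `e⃗` and `f⃗` are complementary central elements of `A`. -/
structure ComplCentralWitness (E : Set (Identity L)) (Z : ZeroOneData L)
    (A : Type u) [L.Structure A] (e f : Fin Z.n → A) extends
    CentralWitness E Z A e : Type (u + 1) where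
  hf : ∀ i, iso (f i) = (Z.oneA A₁ i, Z.zeroA A₂ i)

/-- `e⃗` is a central element of `A`. -/
def IsCentral (E : Set (Identity L)) (Z : ZeroOneData L)
    (A : Type u) [L.Structure A] (e : Fin Z.n → A) : Prop :=
  Nonempty (CentralWitness E Z A e)

/-- `e⃗ ⋄_A f⃗`: `e⃗` and `f⃗` are complementary central elements of `A`. -/
def CentDiamond (E : Set (Identity L)) (Z : ZeroOneData L)
    (A : Type u) [L.Structure A] (e f : Fin Z.n → A) : Prop :=
  Nonempty (ComplCentralWitness E Z A e f)

/-- `V` has Boolean factor congruences: for every `A ∈ V`, `FC(A)` is a Boolean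
sublattice of `Con(A)`. -/
def HasBFC (E : Set (Identity L)) : Prop :=
  ∀ (A : Type u) [L.Structure A], InVariety E A → IsBooleanSublattice (FC L A)

/-- `V` is stable by complements: every homomorphism between members of `V`
preserves complementary central elements. -/
def StableByComplements (E : Set (Identity L)) (Z : ZeroOneData L) : Prop :=
  ∀ (A B : Type u) [L.Structure A] [L.Structure B], InVariety E A → InVariety E B →
    ∀ (f : A →[L] B) (e g : Fin Z.n → A), CentDiamond E Z A e g →
      CentDiamond E Z B (fun i => f (e i)) (fun i => f (g i))

/-- A formula is existential: of the form ∃w⃗ ψ with ψ quantifier-free. -/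
def IsExistentialForm {α : Type*} (φ : L.Formula α) : Prop :=
  ∃ (m : ℕ) (ψ : L.BoundedFormula α m), ψ.IsQF ∧ φ = ψ.exs

/-- The formula λ(z⃗, x, y) satisfies the condition (R): for all `A, B ∈ V`,
`A × B ⊨ λ([0⃗,1⃗], (a,c), (b,d))` iff `c = d`. -/
def RightFormulaWorks (E : Set (Identity L)) (Z : ZeroOneData L)
    (φ : L.Formula ((Fin Z.n) ⊕ (Fin 2))) : Prop :=
  ∀ (A B : Type u) [L.Structure A] [L.Structure B], InVariety E A → InVariety E B →
    ∀ (a b : A) (c d : B),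
      (φ.Realize (M := A × B)
        (Sum.elim (fun i => (Z.zeroA A i, Z.oneA B i)) ![(a, c), (b, d)]) ↔ c = d)

/-- The formula ρ(z⃗, x, y) satisfies the condition (L): for all `A, B ∈ V`,
`A × B ⊨ ρ([0⃗,1⃗], (a,c), (b,d))` iff `a = b`. -/
def LeftFormulaWorks (E : Set (Identity L)) (Z : ZeroOneData L)
    (φ : L.Formula ((Fin Z.n) ⊕ (Fin 2))) : Prop :=
  ∀ (A B : Type u) [L.Structure A] [L.Structure B], InVariety E A → InVariety E B →
    ∀ (a b : A) (c d : B),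
      (φ.Realize (M := A × B)
        (Sum.elim (fun i => (Z.zeroA A i, Z.oneA B i)) ![(a, c), (b, d)]) ↔ a = b)

/-- `V` has right existentially definable factor congruences. -/
def HasRexDFC (E : Set (Identity L)) (Z : ZeroOneData L) : Prop :=
  HasBFC.{u} E ∧ ∃ φ : L.Formula ((Fin Z.n) ⊕ (Fin 2)),
    IsExistentialForm φ ∧ RightFormulaWorks.{u} E Z φ

/-- `V` has left existentially definable factor congruences. -/
def HasLexDFC (E : Set (Identity L)) (Z : ZeroOneData L) : Prop :=
  HasBFC.{u} E ∧ ∃ φ : L.Formula ((Fin Z.n) ⊕ (Fin 2)),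
    IsExistentialForm φ ∧ LeftFormulaWorks.{u} E Z φ

/-- `(θ, δ)` is the pair of complementary factor congruences associated with the
central element `e⃗`, i.e. `θ ⋄ δ`, `[e⃗,0⃗] ∈ θ` and `[e⃗,1⃗] ∈ δ`. -/
def PairFor (Z : ZeroOneData L) (A : Type u) [L.Structure A]
    (e : Fin Z.n → A) (θ δ : AlgCon L A) : Prop :=
  IsComplFC θ δ ∧ inCon θ e (Z.zeroA A) ∧ inCon δ e (Z.oneA A)

/-- `a⃗ = e⃗ ∧ f⃗` in the center: `[a⃗,0⃗] ∈ θ_{0,e} ∩ θ_{0,f}` and `[a⃗,1⃗] ∈ θ_{1,e} ∨ θ_{1,f}`. -/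
def IsMeetOf (Z : ZeroOneData L) (A : Type u) [L.Structure A]
    (e f a : Fin Z.n → A) : Prop :=
  ∃ θ₀e θ₁e θ₀f θ₁f : AlgCon L A, PairFor Z A e θ₀e θ₁e ∧ PairFor Z A f θ₀f θ₁f ∧
    inCon (θ₀e.inf θ₀f) a (Z.zeroA A) ∧ inCon (θ₁e.sup θ₁f) a (Z.oneA A)

/-- `a⃗ = e⃗ ∨ f⃗` in the center: `[a⃗,0⃗] ∈ θ_{0,e} ∨ θ_{0,f}` and `[a⃗,1⃗] ∈ θ_{1,e} ∩ θ_{1,f}`. -/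
def IsJoinOf (Z : ZeroOneData L) (A : Type u) [L.Structure A]
    (e f a : Fin Z.n → A) : Prop :=
  ∃ θ₀e θ₁e θ₀f θ₁f : AlgCon L A, PairFor Z A e θ₀e θ₁e ∧ PairFor Z A f θ₀f θ₁f ∧
    inCon (θ₀e.sup θ₀f) a (Z.zeroA A) ∧ inCon (θ₁e.inf θ₁f) a (Z.oneA A)

/-- `a⃗ = e⃗^c` in the center: `[a⃗,1⃗] ∈ θ_{0,e}` and `[a⃗,0⃗] ∈ θ_{1,e}`. -/
def IsComplOf (Z : ZeroOneData L) (A : Type u) [L.Structure A]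
    (e a : Fin Z.n → A) : Prop :=
  ∃ θ₀e θ₁e : AlgCon L A, PairFor Z A e θ₀e θ₁e ∧
    inCon θ₀e a (Z.oneA A) ∧ inCon θ₁e a (Z.zeroA A)

section Quotient

variable {A : Type u} [L.Structure A]

/-- The setoid underlying a congruence. -/
def AlgCon.setoid (c : AlgCon L A) : Setoid A :=
  ⟨c.r, ⟨c.refl, fun h => c.symm h, fun h1 h2 => c.trans h1 h2⟩⟩

/-- The quotient algebra `A/θ`. -/
def ConQuot (c : AlgCon L A) : Type u := Quotient c.setoid

/-- The class of `a` in `A/θ`. -/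
def ConQuot.mk (c : AlgCon L A) (a : A) : ConQuot c := Quotient.mk c.setoid a

noncomputable instance conQuotStructure (c : AlgCon L A) : L.Structure (ConQuot c) where
  funMap := fun f x => ConQuot.mk c (funMap f (fun i => (Quotient.out (α := A) (s := c.setoid) (x i))))
  RelMap := fun r x => ∃ as : Fin _ → A, (∀ i, ConQuot.mk c (as i) = x i) ∧ RelMap r as

theorem conQuot_funMap_mk (c : AlgCon L A) {m : ℕ} (f : L.Functions m) (as : Fin m → A) :
    funMap f (fun i => ConQuot.mk c (as i)) = ConQuot.mk c (funMap f as) := by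
  show ConQuot.mk c _ = ConQuot.mk c _
  apply Quotient.sound
  apply c.compat
  intro i
  exact Quotient.mk_out (s := c.setoid) (as i)

/-- The canonical quotient homomorphism `A → A/θ`. -/
def conQuotMk (c : AlgCon L A) : A →[L] ConQuot c where
  toFun := ConQuot.mk c
  map_fun' := fun f x => (conQuot_funMap_mk c f x).symm
  map_rel' := fun _r x h => ⟨x, fun _ => rfl, h⟩

end Quotient

end Paper

/-!
Under BFC and `V ⊨ 0⃗ ≈ 1⃗ → x ≈ y` the pair `(θ_{0,e}, θ_{1,e})` is unique, so if
`τ : A ≅ A₁ × A₂` sends `e⃗` to `[0⃗, 1⃗]`, then `θ_{0,e}` is the kernel of `π₁ ∘ τ`; and always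
`θ(0⃗, e⃗) ⊆ θ_{0,e}`.

(⇒) Let `γ = θ(0⃗, e⃗)`. The map `τ a ↦ (a/γ, (τ a).2)` is an embedding
`A₁ × A₂ ↪ (A/γ) × A₂` fixing `[0⃗, 1⃗]`. Existential formulas go up along embeddings, so if
`(τ a).1 = (τ b).1` then `ρ` holds of the images, which forces `a/γ = b/γ`.

(⇐) Membership in `θ(a⃗, b⃗)` is witnessed by Mal'cev chains whose links are pairs
`t(w⃗, a⃗, b⃗), t(w⃗, b⃗, a⃗)`, and a chain of fixed shape is described by an existential formula.
Let `F` be free on `x, y`. The hypothesis applied to `F × F` puts `((x, x), (x, y))` in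
`θ(0⃗, [0⃗, 1⃗])`, and the chain this gives maps onto `((a, c), (a, d))` in every `A × B`.
Conversely, such a chain lies in `θ(0⃗, [0⃗, 1⃗]) ⊆ ker π₁`.
-/

theorem Relation.reflTransGen_iff_exists_fin {α : Type*} {r : α → α → Prop} {x y : α} :
    ReflTransGen r x y ↔ ∃ (N : ℕ) (p : Fin (N + 1) → α),
      p 0 = x ∧ p (Fin.last N) = y ∧ ∀ j : Fin N, r (p j.castSucc) (p j.succ) := by
  constructor
  · intro h
    induction h using Relation.ReflTransGen.head_induction_on with
    | refl => exact ⟨0, fun _ => y, rfl, rfl, Fin.elim0⟩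
    | head hxz _ ih =>
      obtain ⟨N, p, h₀, hl, hs⟩ := ih
      refine ⟨N + 1, Fin.cons _ p, rfl, by simpa using hl, Fin.cases ?_ fun j => ?_⟩
      · simpa [h₀] using hxz
      · simpa using hs j
  · rintro ⟨N, p, rfl, rfl, hs⟩
    suffices ∀ j, ReflTransGen r (p 0) (p j) from this _
    exact Fin.induction .refl fun j ih => ih.tail (hs j)

theorem Relation.ReflTransGen.apply_of_update {ι α β : Type*} [Fintype ι] [DecidableEq ι]
    {r : α → α → Prop} {s : β → β → Prop} {F : (ι → α) → β}
    (hF : ∀ u i {a b}, r a b → s (F (Function.update u i a)) (F (Function.update u i b)))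
    {x y : ι → α} (h : ∀ i, ReflTransGen r (x i) (y i)) : ReflTransGen s (F x) (F y) := by
  suffices ∀ t : Finset ι, ReflTransGen s (F x) (F (t.piecewise y x)) by
    simpa using this Finset.univ
  intro t
  induction t using Finset.induction_on with
  | empty => simpa using .refl
  | insert i t hi ih =>
    refine ih.trans ?_
    rw [Finset.piecewise_insert]
    conv_lhs => rw [← Function.update_eq_self i (t.piecewise y x),
      Finset.piecewise_eq_of_notMem _ _ _ hi]
    exact (h i).lift (fun a => F (Function.update _ i a)) fun a b => hF _ i

namespace Paper

variable {L : FirstOrder.Language.{0, 0}}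

namespace AlgCon

variable {A B : Type*} [L.Structure A] [L.Structure B]

theorem realize_term (c : AlgCon L A) {β : Type*} (t : L.Term β) {p q : β → A}
    (h : ∀ i, c.r (p i) (q i)) : c.r (t.realize p) (t.realize q) := by
  induction t with
  | var i => exact h i
  | func f ts ih => exact c.compat f _ _ ih

theorem conGen_le {R : A → A → Prop} {c : AlgCon L A} (h : ∀ x y, R x y → c.r x y) {a b : A}
    (hab : (conGen L R).r a b) : c.r a b :=
  hab c h

theorem conGen_of {R : A → A → Prop} {a b : A} (h : R a b) : (conGen L R).r a b :=
  fun _ hc => hc a b h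

theorem sup_delta (c : AlgCon L A) : c.sup (delta L A) = c :=
  ext' fun _ _ => ⟨conGen_le fun x _ h => h.elim id fun hxy => hxy ▸ c.refl x,
    fun h => conGen_of (Or.inl h)⟩

theorem inf_nabla (c : AlgCon L A) : c.inf (nabla L A) = c :=
  ext' fun _ _ => ⟨And.left, fun h => ⟨h, trivial⟩⟩

def ker (g : A →[L] B) : AlgCon L A where
  r a b := g a = g b
  refl _ := rfl
  symm h := h.symm
  trans h₁ h₂ := h₁.trans h₂
  compat f x y h := by simp only [HomClass.map_fun]; exact congrArg _ (funext h)

end AlgCon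

section Basic

variable {A B : Type*} [L.Structure A] [L.Structure B] {n : ℕ}

theorem inCon.symm {θ : AlgCon L A} {a b : Fin n → A} (h : inCon θ a b) : inCon θ b a :=
  fun i => θ.symm (h i)

theorem inCon_thetaPairs (a b : Fin n → A) : inCon (thetaPairs (L := L) a b) a b :=
  fun i => AlgCon.conGen_of ⟨i, rfl, rfl⟩

theorem thetaPairs_le {θ : AlgCon L A} {a b : Fin n → A} (h : inCon θ a b) {x y : A}
    (hxy : (thetaPairs (L := L) a b).r x y) : θ.r x y :=
  AlgCon.conGen_le (by rintro _ _ ⟨i, rfl, rfl⟩; exact h i) hxy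

theorem map_realize_closed (g : A →[L] B) (t : L.Term Empty) :
    g (t.realize Empty.elim) = t.realize Empty.elim := by
  rw [← HomClass.realize_term]
  exact congrArg (t.realize ·) (funext fun x => x.elim)

theorem ZeroOneData.map_zeroA (Z : ZeroOneData L) (g : A →[L] B) (i : Fin Z.n) :
    g (Z.zeroA A i) = Z.zeroA B i :=
  map_realize_closed g _

theorem ZeroOneData.map_oneA (Z : ZeroOneData L) (g : A →[L] B) (i : Fin Z.n) :
    g (Z.oneA A i) = Z.oneA B i :=
  map_realize_closed g _

theorem ConQuot.mk_eq_iff (c : AlgCon L A) {a b : A} :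
    ConQuot.mk c a = ConQuot.mk c b ↔ c.r a b :=
  ⟨fun h => Quotient.exact h, fun h => Quotient.sound h⟩

theorem AlgCon.eq_nabla_of_subsingleton (c : AlgCon L A) [Subsingleton (ConQuot c)] :
    c = AlgCon.nabla L A :=
  AlgCon.ext' fun _ _ =>
    ⟨fun _ => trivial, fun _ => (ConQuot.mk_eq_iff c).1 (Subsingleton.elim _ _)⟩

theorem InVariety.quot {E : Set (Identity L)} (hA : InVariety E A) (c : AlgCon L A) :
    InVariety E (ConQuot c) := by
  intro e he v
  have hv : v = conQuotMk c ∘ fun i => Quotient.out (s := c.setoid) (v i) :=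
    funext fun i => (Quotient.out_eq _).symm
  rw [hv, HomClass.realize_term, HomClass.realize_term, hA e he]

end Basic

section Product

variable {A B C D : Type u} [L.Structure A] [L.Structure B] [L.Structure C] [L.Structure D]

def fstHom : A × B →[L] A where
  toFun := Prod.fst
  map_rel' _ _ h := h.1

def sndHom : A × B →[L] B where
  toFun := Prod.snd
  map_rel' _ _ h := h.2

def pairHom (f : C →[L] A) (g : C →[L] B) : C →[L] A × B where
  toFun c := (f c, g c)
  map_fun' φ x := Prod.ext (HomClass.map_fun f φ x) (HomClass.map_fun g φ x)
  map_rel' r x h := ⟨HomClass.map_rel f r x h, HomClass.map_rel g r x h⟩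

def prodMapHom (f : A →[L] C) (g : B →[L] D) : A × B →[L] C × D :=
  pairHom (f.comp fstHom) (g.comp sndHom)

theorem realize_prod {β : Type*} (t : L.Term β) (v : β → A × B) :
    t.realize v = (t.realize (Prod.fst ∘ v), t.realize (Prod.snd ∘ v)) :=
  Prod.ext (HomClass.realize_term (fstHom (B := B)) (t := t)).symm
    (HomClass.realize_term (sndHom (A := A)) (t := t)).symm

theorem InVariety.prod {E : Set (Identity L)} (hA : InVariety E A) (hB : InVariety E B) :
    InVariety E (A × B) := by
  intro e he v
  rw [realize_prod, realize_prod, hA e he, hB e he]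

end Product

section FactorCongruences

variable {E : Set (Identity L)} {Z : ZeroOneData L} {A : Type u} [L.Structure A]

/-- In `A / (c₀ ∨ c₁)` the tuples `0⃗` and `1⃗` both become equal to `e⃗`. -/
theorem sup_eq_nabla_of_inCon (hsep : Z.Separates.{u} E) (hA : InVariety E A)
    {e : Fin Z.n → A} {c₀ c₁ : AlgCon L A} (h₀ : inCon c₀ e (Z.zeroA A))
    (h₁ : inCon c₁ e (Z.oneA A)) : c₀.sup c₁ = AlgCon.nabla L A := by
  set s := c₀.sup c₁
  have : Subsingleton (ConQuot s) := hsep _ (hA.quot s) fun i => by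
    rw [← Z.map_zeroA (conQuotMk s), ← Z.map_oneA (conQuotMk s)]
    exact (ConQuot.mk_eq_iff s).2
      (s.trans (AlgCon.conGen_of (Or.inl (c₀.symm (h₀ i)))) (AlgCon.conGen_of (Or.inr (h₁ i))))
  exact s.eq_nabla_of_subsingleton

theorem IsComplFC.symm {θ δ : AlgCon L A} (h : IsComplFC θ δ) : IsComplFC δ θ := by
  refine ⟨?_, fun a b => ?_⟩
  · rw [← h.1]
    exact AlgCon.ext' fun _ _ => and_comm
  · obtain ⟨z, hθ, hδ⟩ := h.2 b a
    exact ⟨z, δ.symm hδ, θ.symm hθ⟩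

/-- As `θ₂ ∨ δ₁ = ∇`, distributivity gives `θ₁ = θ₁ ∧ (θ₂ ∨ δ₁) = (θ₁ ∧ θ₂) ∨ Δ = θ₁ ∧ θ₂`. -/
theorem PairFor.unique (hsep : Z.Separates.{u} E) (hbfc : HasBFC.{u} E) (hA : InVariety E A)
    {e : Fin Z.n → A} {θ δ θ' δ' : AlgCon L A} (h : PairFor Z A e θ δ)
    (h' : PairFor Z A e θ' δ') : θ = θ' := by
  obtain ⟨-, -, -, -, hdistrib, -⟩ := hbfc A hA
  have le_of_pairFor : ∀ {θ₁ δ₁ θ₂ δ₂ : AlgCon L A}, PairFor Z A e θ₁ δ₁ →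
      PairFor Z A e θ₂ δ₂ → ∀ a b, θ₁.r a b → θ₂.r a b := by
    intro θ₁ δ₁ θ₂ δ₂ h₁ h₂ a b hab
    have hd := hdistrib θ₁ ⟨_, h₁.1⟩ θ₂ ⟨_, h₂.1⟩ δ₁ ⟨_, h₁.1.symm⟩
    rw [sup_eq_nabla_of_inCon hsep hA h₂.2.1 h₁.2.2, AlgCon.inf_nabla, h₁.1.1,
      AlgCon.sup_delta] at hd
    exact (hd ▸ hab : (θ₁.inf θ₂).r a b).2
  exact AlgCon.ext' fun a b => ⟨le_of_pairFor h h' a b, le_of_pairFor h' h a b⟩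

end FactorCongruences

section Central

variable {E : Set (Identity L)} {Z : ZeroOneData L} {A A₁ A₂ : Type u}
  [L.Structure A] [L.Structure A₁] [L.Structure A₂]

theorem isComplFC_ker_fst_ker_snd (τ : A ≃[L] A₁ × A₂) :
    IsComplFC (AlgCon.ker (fstHom.comp τ.toHom)) (AlgCon.ker (sndHom.comp τ.toHom)) := by
  refine ⟨AlgCon.ext' fun a b => ?_, fun a b => ⟨τ.symm ((τ a).1, (τ b).2), ?_, ?_⟩⟩
  · exact Prod.ext_iff.symm.trans τ.injective.eq_iff
  · change (τ a).1 = (τ (τ.symm _)).1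
    rw [τ.apply_symm_apply]
  · change (τ (τ.symm _)).2 = (τ b).2
    rw [τ.apply_symm_apply]

attribute [local instance] CentralWitness.s₁ CentralWitness.s₂

theorem CentralWitness.pairFor {e : Fin Z.n → A} (W : CentralWitness E Z A e) :
    PairFor Z A e (AlgCon.ker ((fstHom (L := L)).comp W.iso.toHom))
      (AlgCon.ker ((sndHom (L := L)).comp W.iso.toHom)) := by
  refine ⟨isComplFC_ker_fst_ker_snd W.iso, fun i => ?_, fun i => ?_⟩
  · change (W.iso (e i)).1 = fstHom (L := L) (W.iso.toHom (Z.zeroA A i))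
    rw [Z.map_zeroA, Z.map_zeroA, W.he]
  · change (W.iso (e i)).2 = sndHom (L := L) (W.iso.toHom (Z.oneA A i))
    rw [Z.map_oneA, Z.map_oneA, W.he]

def CentralWitness.prod (hA₁ : InVariety E A₁) (hA₂ : InVariety E A₂) :
    CentralWitness E Z (A₁ × A₂) fun i => (Z.zeroA A₁ i, Z.oneA A₂ i) where
  A₁ := A₁
  A₂ := A₂
  mem₁ := hA₁
  mem₂ := hA₂
  iso := Language.Equiv.refl L _
  he _ := rfl

theorem IsExistentialForm.realize_embedding {α : Type*} {M N : Type*} [L.Structure M]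
    [L.Structure N] {φ : L.Formula α} (hφ : IsExistentialForm φ) (f : M ↪[L] N) {v : α → M}
    (h : φ.Realize v) : φ.Realize (f ∘ v) := by
  obtain ⟨m, ψ, hψ, rfl⟩ := hφ
  obtain ⟨xs, hxs⟩ := BoundedFormula.realize_exs.1 h
  exact BoundedFormula.realize_exs.2 ⟨f ∘ xs, (hψ.realize_embedding f).2 hxs⟩

theorem CentralWitness.ker_fst_eq_thetaPairs [L.IsAlgebraic] {φ : L.Formula (Fin Z.n ⊕ Fin 2)}
    (hφ : IsExistentialForm φ) (hρ : LeftFormulaWorks.{u} E Z φ) (hA : InVariety E A)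
    {e : Fin Z.n → A} (W : CentralWitness E Z A e) :
    AlgCon.ker ((fstHom (L := L)).comp W.iso.toHom) = thetaPairs (Z.zeroA A) e := by
  set τ := W.iso
  set γ := thetaPairs (L := L) (Z.zeroA A) e
  refine AlgCon.ext' fun a b => ⟨fun hab => ?_, thetaPairs_le W.pairFor.2.1.symm⟩
  let g : A →[L] ConQuot γ × W.A₂ := pairHom (conQuotMk γ) (sndHom.comp τ.toHom)
  have hg : Function.Injective g := fun x y hxy => by
    obtain ⟨hγ, h₂⟩ := Prod.ext_iff.1 hxy
    exact τ.injective (Prod.ext (thetaPairs_le W.pairFor.2.1.symm ((ConQuot.mk_eq_iff γ).1 hγ)) h₂)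
  let k := Embedding.ofInjective (f := g.comp τ.symm.toHom) (hg.comp τ.symm.injective)
  have hk : ∀ x, k x = (ConQuot.mk γ (τ.symm x), x.2) := fun x => by
    change (_, (τ (τ.symm x)).2) = _
    rw [τ.apply_symm_apply]
    rfl
  have hk₀₁ : ∀ i, k (Z.zeroA W.A₁ i, Z.oneA W.A₂ i) = (Z.zeroA (ConQuot γ) i, Z.oneA W.A₂ i) := by
    intro i
    refine (hk _).trans (Prod.ext ?_ rfl)
    rw [← W.he, τ.symm_apply_apply, ← Z.map_zeroA (conQuotMk γ)]
    exact (ConQuot.mk_eq_iff γ).2 (γ.symm (inCon_thetaPairs _ _ i))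
  have h := hφ.realize_embedding k
    ((hρ W.A₁ W.A₂ W.mem₁ W.mem₂ (τ a).1 (τ b).1 (τ a).2 (τ b).2).2 hab)
  have hv : k ∘ Sum.elim (fun i => (Z.zeroA W.A₁ i, Z.oneA W.A₂ i))
        ![((τ a).1, (τ a).2), ((τ b).1, (τ b).2)] =
      Sum.elim (fun i => (Z.zeroA (ConQuot γ) i, Z.oneA W.A₂ i))
        ![(ConQuot.mk γ a, (τ a).2), (ConQuot.mk γ b, (τ b).2)] := by
    funext x
    rcases x with i | j
    · exact hk₀₁ i
    · fin_cases j <;> simp [hk]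
  rw [hv] at h
  exact (ConQuot.mk_eq_iff γ).1 ((hρ _ W.A₂ (hA.quot γ) W.mem₂ _ _ _ _).1 h)

end Central

section Malcev

variable {n : ℕ} {C D : Type*} [L.Structure C] [L.Structure D]

/-- A Mal'cev step `t(w⃗, u⃗, v⃗)` links `t(w⃗, a⃗, b⃗)` with `t(w⃗, b⃗, a⃗)`; the pairs generating
`θ(a⃗, b⃗)` are the steps `t = uᵢ`. -/
def MalcevTerm (L : FirstOrder.Language.{0, 0}) (n : ℕ) : Type :=
  Σ m : ℕ, L.Term (Fin m ⊕ (Fin n ⊕ Fin n))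

def MalcevTerm.Links (s : MalcevTerm L n) (a b : Fin n → C) (x y : C) : Prop :=
  ∃ w : Fin s.1 → C, x = s.2.realize (Sum.elim w (Sum.elim a b)) ∧
    y = s.2.realize (Sum.elim w (Sum.elim b a))

theorem MalcevTerm.Links.map {s : MalcevTerm L n} {a b : Fin n → C} {x y : C}
    (h : s.Links a b x y) (g : C →[L] D) : s.Links (g ∘ a) (g ∘ b) (g x) (g y) := by
  obtain ⟨w, rfl, rfl⟩ := h
  exact ⟨g ∘ w, by simp only [← HomClass.realize_term, Sum.comp_elim],
    by simp only [← HomClass.realize_term, Sum.comp_elim]⟩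

def MalcevLinked (L : FirstOrder.Language.{0, 0}) [L.Structure C] (a b : Fin n → C) (x y : C) :
    Prop :=
  ∃ s : MalcevTerm L n, s.Links a b x y

namespace MalcevLinked

variable {a b : Fin n → C}

theorem generator (i : Fin n) : MalcevLinked L a b (a i) (b i) :=
  ⟨⟨0, Term.var (Sum.inr (Sum.inl i))⟩, Fin.elim0, rfl, rfl⟩

theorem symm {x y : C} (h : MalcevLinked L a b x y) : MalcevLinked L a b y x := by
  obtain ⟨⟨m, t⟩, w, rfl, rfl⟩ := h
  refine ⟨⟨m, t.relabel (Sum.map id Sum.swap)⟩, w, ?_, ?_⟩ <;>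
    simp only [Term.realize_relabel, Sum.elim_comp_map, Function.comp_id, Sum.elim_swap]

theorem r_of_inCon {c : AlgCon L C} (hc : inCon c a b) {x y : C} (h : MalcevLinked L a b x y) :
    c.r x y := by
  obtain ⟨⟨m, t⟩, w, rfl, rfl⟩ := h
  refine c.realize_term t fun z => ?_
  rcases z with i | i | i
  · exact c.refl _
  · exact hc i
  · exact c.symm (hc i)

/-- Plugging a step into one argument of an operation: the new witnesses are the old ones
followed by the remaining arguments. -/
theorem funMap_update {k : ℕ} (f : L.Functions k) (u : Fin k → C) (i : Fin k) {x y : C}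
    (h : MalcevLinked L a b x y) :
    MalcevLinked L a b (funMap f (Function.update u i x)) (funMap f (Function.update u i y)) := by
  obtain ⟨⟨m, t⟩, w, rfl, rfl⟩ := h
  let t' : L.Term (Fin (m + k) ⊕ (Fin n ⊕ Fin n)) := Term.func f fun j =>
    if j = i then t.relabel (Sum.map (finSumFinEquiv ∘ Sum.inl) id)
    else Term.var (Sum.inl (finSumFinEquiv (Sum.inr j)))
  have key : ∀ a' b' : Fin n → C,
      t'.realize (Sum.elim (Sum.elim w u ∘ finSumFinEquiv.symm) (Sum.elim a' b')) =
        funMap f (Function.update u i (t.realize (Sum.elim w (Sum.elim a' b')))) := by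
    intro a' b'
    simp only [t', Term.realize_func]
    congr 1
    funext j
    by_cases hj : j = i
    · subst hj
      simp only [if_pos, Function.update_self, Term.realize_relabel]
      congr 1
      funext z
      rcases z with z | z <;> simp
    · simp [hj]
  exact ⟨⟨m + k, t'⟩, _, (key a b).symm, (key b a).symm⟩

end MalcevLinked

def malcevCon (a b : Fin n → C) : AlgCon L C where
  r := Relation.ReflTransGen (MalcevLinked L a b)
  refl _ := .refl
  symm h := by
    induction h with
    | refl => exact .refl
    | tail _ hlink ih => exact .head hlink.symm ih
  trans := .trans
  compat f _ _ := Relation.ReflTransGen.apply_of_update fun u i _ _ =>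
    MalcevLinked.funMap_update f u i

theorem thetaPairs_r_iff_reflTransGen (a b : Fin n → C) (x y : C) :
    (thetaPairs (L := L) a b).r x y ↔ Relation.ReflTransGen (MalcevLinked L a b) x y := by
  refine ⟨thetaPairs_le (θ := malcevCon a b) fun i => .single (.generator i), fun h => ?_⟩
  induction h with
  | refl => exact AlgCon.refl _ x
  | tail _ hlink ih => exact AlgCon.trans _ ih (hlink.r_of_inCon (inCon_thetaPairs a b))

def MalcevChain {N : ℕ} (steps : Fin N → MalcevTerm L n) (a b : Fin n → C) (x y : C) : Prop :=
  ∃ p : Fin (N + 1) → C, p 0 = x ∧ p (Fin.last N) = y ∧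
    ∀ j, (steps j).Links a b (p j.castSucc) (p j.succ)

theorem thetaPairs_r_iff_exists_malcevChain (a b : Fin n → C) (x y : C) :
    (thetaPairs (L := L) a b).r x y ↔
      ∃ (N : ℕ) (steps : Fin N → MalcevTerm L n), MalcevChain steps a b x y := by
  rw [thetaPairs_r_iff_reflTransGen, Relation.reflTransGen_iff_exists_fin]
  constructor
  · rintro ⟨N, p, h₀, hl, hs⟩
    choose steps hsteps using hs
    exact ⟨N, steps, p, h₀, hl, hsteps⟩
  · rintro ⟨N, steps, p, h₀, hl, hs⟩
    exact ⟨N, p, h₀, hl, fun j => ⟨_, hs j⟩⟩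

theorem MalcevChain.map {N : ℕ} {steps : Fin N → MalcevTerm L n} {a b : Fin n → C} {x y : C}
    (h : MalcevChain steps a b x y) (g : C →[L] D) :
    MalcevChain steps (g ∘ a) (g ∘ b) (g x) (g y) := by
  obtain ⟨p, rfl, rfl, hs⟩ := h
  exact ⟨g ∘ p, rfl, rfl, fun j => (hs j).map g⟩

section Formula

variable {N : ℕ}

theorem isQF_iInf {α β : Type*} [Finite β] {f : β → L.BoundedFormula α n} (h : ∀ b, (f b).IsQF) :
    (BoundedFormula.iInf f).IsQF := by
  let _ := Fintype.ofFinite β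
  suffices ∀ l : List (L.BoundedFormula α n), (∀ φ ∈ l, φ.IsQF) → (l.foldr (· ⊓ ·) ⊤).IsQF from
    this _ (by simpa using h)
  intro l hl
  induction l with
  | nil => exact .top
  | cons φ l ih => exact (hl φ (by simp)).inf (ih fun ψ hψ => hl ψ (by simp [hψ]))

/-- The points `p₀, …, p_N` of a chain and the witnesses of its steps. -/
abbrev MalcevChainVars (steps : Fin N → MalcevTerm L n) : Type :=
  Fin (N + 1) ⊕ Σ j, Fin (steps j).1

noncomputable def malcevChainMatrix (c : Fin n → L.Term Empty) (steps : Fin N → MalcevTerm L n) :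
    L.Formula ((Fin n ⊕ Fin 2) ⊕ MalcevChainVars steps) :=
  let pt (j : Fin (N + 1)) : L.Term ((Fin n ⊕ Fin 2) ⊕ MalcevChainVars steps) :=
    Term.var (Sum.inr (Sum.inl j))
  let const (i : Fin n) := (c i).relabel Empty.elim
  let z (i : Fin n) := Term.var (Sum.inl (Sum.inl i))
  let side (j : Fin N) (u v : Fin n → L.Term ((Fin n ⊕ Fin 2) ⊕ MalcevChainVars steps)) :=
    (steps j).2.subst (Sum.elim (fun k => Term.var (Sum.inr (Sum.inr ⟨j, k⟩))) (Sum.elim u v))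
  (pt 0).equal (Term.var (Sum.inl (Sum.inr 0))) ⊓
    (pt (Fin.last N)).equal (Term.var (Sum.inl (Sum.inr 1))) ⊓
    Formula.iInf fun j =>
      (pt j.castSucc).equal (side j const z) ⊓ (pt j.succ).equal (side j z const)

theorem isQF_malcevChainMatrix (c : Fin n → L.Term Empty) (steps : Fin N → MalcevTerm L n) :
    (malcevChainMatrix c steps).IsQF :=
  ((BoundedFormula.IsAtomic.equal _ _).isQF.inf (BoundedFormula.IsAtomic.equal _ _).isQF).inf
    (isQF_iInf fun _ =>
      (BoundedFormula.IsAtomic.equal _ _).isQF.inf (BoundedFormula.IsAtomic.equal _ _).isQF)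

/-- `∃ p⃗ w⃗, x = p₀ ∧ p_N = y ∧ ⋀ⱼ (pⱼ, pⱼ₊₁ linked by steps j)`, with `c⃗` in the role of `a⃗`
and the free variables `z⃗` in the role of `b⃗`. -/
noncomputable def malcevChainFormula (c : Fin n → L.Term Empty)
    (steps : Fin N → MalcevTerm L n) : L.Formula (Fin n ⊕ Fin 2) :=
  (malcevChainMatrix c steps).iExs (MalcevChainVars steps)

theorem isExistentialForm_malcevChainFormula (c : Fin n → L.Term Empty)
    (steps : Fin N → MalcevTerm L n) : IsExistentialForm (malcevChainFormula c steps) :=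
  ⟨_, _, (isQF_malcevChainMatrix c steps).relabel _, rfl⟩

theorem realize_malcevChainFormula (c : Fin n → L.Term Empty) (steps : Fin N → MalcevTerm L n)
    (v : Fin n ⊕ Fin 2 → C) :
    (malcevChainFormula c steps).Realize v ↔
      MalcevChain steps (fun i => (c i).realize Empty.elim) (v ∘ Sum.inl) (v (Sum.inr 0))
        (v (Sum.inr 1)) := by
  have hc : ∀ (w : (Fin n ⊕ Fin 2) ⊕ MalcevChainVars steps → C) i,
      ((c i).relabel Empty.elim).realize w = (c i).realize Empty.elim :=
    fun w i => by rw [Term.realize_relabel]; exact congrArg (Term.realize · _) (funext (·.elim))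
  have hval : ∀ (w : (Fin n ⊕ Fin 2) ⊕ MalcevChainVars steps → C) (j : Fin N)
      (u u' : Fin n → L.Term ((Fin n ⊕ Fin 2) ⊕ MalcevChainVars steps)),
      (fun a =>
          (Sum.elim (fun k => Term.var (Sum.inr (Sum.inr ⟨j, k⟩))) (Sum.elim u u') a).realize w) =
        Sum.elim (fun k => w (Sum.inr (Sum.inr ⟨j, k⟩)))
            (Sum.elim (fun i => (u i).realize w) (fun i => (u' i).realize w)) := by
    intro w j u u'
    funext a
    rcases a with _ | _ | _ <;> rfl
  simp only [malcevChainFormula, malcevChainMatrix, Formula.realize_iExs, Formula.realize_inf,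
    Formula.realize_equal, Formula.realize_iInf, Term.realize_var, Term.realize_subst, hval, hc,
    Sum.elim_inl, Sum.elim_inr]
  constructor
  · rintro ⟨i, ⟨h₀, hl⟩, hs⟩
    exact ⟨i ∘ Sum.inl, h₀, hl, fun j => ⟨fun k => i (Sum.inr ⟨j, k⟩), hs j⟩⟩
  · rintro ⟨p, h₀, hl, hs⟩
    choose w hw using hs
    exact ⟨Sum.elim p fun q => w q.1 q.2, ⟨h₀, hl⟩, hw⟩

end Formula

end Malcev

section FreeAlgebra

variable {E : Set (Identity L)} {α : Type u} {A : Type u} [L.Structure A]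

instance termStructure (β : Type*) : L.Structure (L.Term β) where
  funMap := Term.func
  RelMap _ _ := False

theorem realize_eq_subst {β γ : Type*} (t : L.Term β) (σ : β → L.Term γ) :
    t.realize σ = t.subst σ := by
  induction t with
  | var => rfl
  | func f ts ih => exact congrArg (Term.func f) (funext ih)

def freeCon (E : Set (Identity L)) (α : Type u) : AlgCon L (L.Term α) where
  r s t := ∀ (A : Type u) [L.Structure A], InVariety E A → ∀ v : α → A, s.realize v = t.realize v
  refl _ _ _ _ _ := rfl
  symm h A _ hA v := (h A hA v).symm
  trans h₁ h₂ A _ hA v := (h₁ A hA v).trans (h₂ A hA v)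
  compat f _ _ h A _ hA v := congrArg (funMap f) (funext fun i => h i A hA v)

abbrev FreeAlg (E : Set (Identity L)) (α : Type u) : Type u :=
  ConQuot (freeCon E α)

def FreeAlg.of (E : Set (Identity L)) (x : α) : FreeAlg E α :=
  ConQuot.mk _ (Term.var x)

theorem FreeAlg.inVariety (E : Set (Identity L)) (α : Type u) : InVariety E (FreeAlg E α) := by
  intro e he v
  have hv : v = conQuotMk (freeCon E α) ∘ fun i => Quotient.out (s := (freeCon E α).setoid) (v i) :=
    funext fun i => (Quotient.out_eq _).symm
  rw [hv, HomClass.realize_term, HomClass.realize_term, realize_eq_subst, realize_eq_subst]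
  refine (ConQuot.mk_eq_iff _).2 fun A _ hA w => ?_
  rw [Term.realize_subst, Term.realize_subst]
  exact hA e he _

noncomputable def FreeAlg.lift (hA : InVariety E A) (v : α → A) : FreeAlg E α →[L] A where
  toFun := Quotient.lift (Term.realize v) fun s t (h : (freeCon E α).r s t) => h A hA v
  map_fun' f x := by
    change funMap f (fun i => (Quotient.out (s := (freeCon E α).setoid) (x i)).realize v) = _
    exact congrArg (funMap f) (funext fun i => congrArg (Quotient.lift _ _) (Quotient.out_eq (x i)))
  map_rel' _ _ h := h.elim fun _ h => h.2.elim

end FreeAlgebra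

section RightToLeft

variable {E : Set (Identity L)} {Z : ZeroOneData L}

def FactorCongruencesPrincipal (E : Set (Identity L)) (Z : ZeroOneData L) : Prop :=
  ∀ (A : Type u) [L.Structure A], InVariety E A →
    ∀ e : Fin Z.n → A, IsCentral E Z A e →
      ∀ θ δ : AlgCon L A, PairFor Z A e θ δ → θ = thetaPairs (L := L) (Z.zeroA A) e

def JoinsLeftEqual (E : Set (Identity L)) (Z : ZeroOneData L) {N : ℕ}
    (steps : Fin N → MalcevTerm L Z.n) : Prop :=
  ∀ (A B : Type u) [L.Structure A] [L.Structure B], InVariety E A → InVariety E B →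
    ∀ (a : A) (c d : B), MalcevChain steps (Z.zeroA (A × B))
      (fun i => (Z.zeroA A i, Z.oneA B i)) (a, c) (a, d)

theorem exists_joinsLeftEqual_of_factorCongruencesPrincipal
    (h : FactorCongruencesPrincipal.{u} E Z) :
    ∃ (N : ℕ) (steps : Fin N → MalcevTerm L Z.n), JoinsLeftEqual.{u} E Z steps := by
  let F := FreeAlg E (ULift.{u} Bool)
  have hF : InVariety E F := FreeAlg.inVariety E _
  let W := CentralWitness.prod (Z := Z) hF hF
  let gen (b : Bool) : F := FreeAlg.of E (ULift.up b)
  have hθ := h (F × F) (hF.prod hF) _ ⟨W⟩ _ _ W.pairFor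
  have hgen : (thetaPairs (L := L) (Z.zeroA (F × F)) fun i => (Z.zeroA F i, Z.oneA F i)).r
      (gen true, gen true) (gen true, gen false) := hθ ▸ rfl
  obtain ⟨N, steps, hchain⟩ := (thetaPairs_r_iff_exists_malcevChain _ _ _ _).1 hgen
  refine ⟨N, steps, fun A B _ _ hA hB a c d => ?_⟩
  let k₁ : F →[L] A := FreeAlg.lift hA fun _ => a
  let k₂ : F →[L] B := FreeAlg.lift hB fun x => if x.down then c else d
  let k : F × F →[L] A × B := prodMapHom k₁ k₂
  have hk₀ : k ∘ Z.zeroA (F × F) = Z.zeroA (A × B) := funext (Z.map_zeroA k)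
  have hk₀₁ : (k ∘ fun i => (Z.zeroA F i, Z.oneA F i)) = fun i => (Z.zeroA A i, Z.oneA B i) :=
    funext fun i => Prod.ext (Z.map_zeroA k₁ i) (Z.map_oneA k₂ i)
  have hchain' := hchain.map k
  rw [hk₀, hk₀₁] at hchain'
  exact hchain'

theorem leftFormulaWorks_malcevChainFormula {N : ℕ} {steps : Fin N → MalcevTerm L Z.n}
    (hsteps : JoinsLeftEqual.{u} E Z steps) :
    LeftFormulaWorks.{u} E Z (malcevChainFormula Z.zero steps) := by
  intro A B _ _ hA hB a b c d
  rw [realize_malcevChainFormula]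
  refine ⟨fun hchain => ?_, fun hab => hab ▸ hsteps A B hA hB a c d⟩
  exact thetaPairs_le (CentralWitness.prod (Z := Z) hA hB).pairFor.2.1.symm
    ((thetaPairs_r_iff_exists_malcevChain _ _ _ _).2 ⟨N, steps, hchain⟩)

end RightToLeft

end Paper

open Paper

theorem statement19_general (L : FirstOrder.Language.{0, 0}) [L.IsAlgebraic]
    (E : Set (Identity L)) (Z : ZeroOneData L)
    (hsep : ZeroOneData.Separates.{u} Z E) (hbfc : HasBFC.{u} E) :
    HasLexDFC.{u} E Z ↔
      ∀ (A : Type u) [L.Structure A], InVariety E A →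
        ∀ e : Fin Z.n → A, IsCentral E Z A e →
          ∀ θ δ : AlgCon L A, PairFor Z A e θ δ → θ = thetaPairs (L := L) (Z.zeroA A) e := by
  constructor
  · rintro ⟨-, φ, hφ, hρ⟩ A _ hA e ⟨W⟩ θ δ hθδ
    rw [hθδ.unique hsep hbfc hA W.pairFor]
    exact W.ker_fst_eq_thetaPairs hφ hρ hA
  · intro h
    obtain ⟨N, steps, hsteps⟩ := exists_joinsLeftEqual_of_factorCongruencesPrincipal h
    exact ⟨hbfc, _, isExistentialForm_malcevChainFormula Z.zero steps,
      leftFormulaWorks_malcevChainFormula hsteps⟩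

/-- A variety with 0⃗ and 1⃗ having BFC has LexDFC iff for every
`A ∈ V` and every central element `e⃗`, the factor congruence θ_{0,e} equals the
principal congruence θ^A(0⃗, e⃗). -/
theorem statement19 (L : FirstOrder.Language.{0, 0}) [L.IsAlgebraic]
    [Finite (Σ n, L.Functions n)]
    (E : Set (Identity L)) (Z : ZeroOneData L)
    (hsep : ZeroOneData.Separates.{u} Z E) (hbfc : HasBFC.{u} E) :
    HasLexDFC.{u} E Z ↔
      ∀ (A : Type u) [L.Structure A], InVariety E A →
        ∀ e : Fin Z.n → A, IsCentral E Z A e →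
          ∀ θ δ : AlgCon L A, PairFor Z A e θ δ → θ = thetaPairs (L := L) (Z.zeroA A) e :=
  statement19_general L E Z hsep hbfc
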